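/- Let L₁ and L₂ be two XML-languages contained in the same D_{a₀}. Then L₁ ⊆ L₂ if and only if S_a(L₁) ⊆ S_a(L₂) for every letter a ∈ A. -/
import Mathlib


variable {α : Type}

/-- Dyck words over `A ∪ Ā`: a letter is a pair `(a, true)` (opening tag `a`)
or `(a, false)` (closing tag `ā`). `IsDyck w` means `w` is well-balanced. -/
inductive IsDyck : List (α × Bool) → Prop
  | nil : IsDyck []
  | cons (a : α) {u v : List (α × Bool)} : IsDyck u → IsDyck v →
      IsDyck ((a, true) :: u ++ (a, false) :: v)

/-- `IsDyckPrime a w`: `w` is a Dyck prime starting with the letter `a`,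
i.e. `w = a u ā` with `u` well-balanced. Membership in `D_a`. -/
def IsDyckPrime (a : α) (w : List (α × Bool)) : Prop :=
  ∃ u, IsDyck u ∧ w = (a, true) :: u ++ [(a, false)]

/-- Membership in the set `D` of all Dyck primes. -/
def IsPrime (w : List (α × Bool)) : Prop := ∃ a, IsDyckPrime a w

/-- `F_a(L) = D_a ∩ F(L)`: factors of words of `L` that are Dyck primes starting with `a`. -/
def Fa (L : Set (List (α × Bool))) (a : α) : Set (List (α × Bool)) :=
  {w | IsDyckPrime a w ∧ ∃ v ∈ L, w <:+: v}

/-- The surface `S_a(L)`: traces `a₁ ⋯ aₙ` of words `a u₁ ⋯ uₙ ā ∈ F_a(L)` with `uᵢ ∈ D_{aᵢ}`. -/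
def Surface (L : Set (List (α × Bool))) (a : α) : Set (List α) :=
  {m | ∃ us : List (List (α × Bool)), List.Forall₂ IsDyckPrime m us ∧
      (a, true) :: us.flatten ++ [(a, false)] ∈ Fa L a}

/-- The language generated by nonterminal `X_a` in the XML-grammar with production
bodies `R : α → Set (List α)` (a body `a₁ ⋯ aₙ ∈ R a` encodes `X_a → a X_{a₁} ⋯ X_{aₙ} ā`). -/
inductive Gen (R : α → Set (List α)) : α → List (α × Bool) → Prop
  | mk (a : α) (m : List α) (us : List (List (α × Bool))) :
      m ∈ R a → List.Forall₂ (Gen R) m us →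
      Gen R a ((a, true) :: us.flatten ++ [(a, false)])

/-- The grammar `R` with axiom `X_{a₀}` is reduced: every nonterminal is accessible
from the axiom and every nonterminal is productive. -/
def Reduced (R : α → Set (List α)) (a₀ : α) : Prop :=
  (∀ a, Relation.ReflTransGen (fun x y => ∃ m ∈ R x, y ∈ m) a₀ a) ∧
  (∀ a, ∃ w, Gen R a w)

/-- An XML-grammar: each production body set `R_a` is a regular language over the
nonterminal alphabet (identified with `A`). -/
def IsXMLGrammar (R : α → Set (List α)) : Prop :=
  ∀ a, Language.IsRegular (R a : Language α)

/-- An XML-language: a language generated by some XML-grammar. -/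
def IsXMLLanguage (L : Set (List (α × Bool))) : Prop :=
  ∃ (a₀ : α) (R : α → Set (List α)), IsXMLGrammar R ∧ L = {w | Gen R a₀ w}


/-! ### Auxiliary material for the proof -/

section Aux

/-- Balance of a word: number of opening minus number of closing letters. -/
def dyckBal : List (α × Bool) → ℤ
  | [] => 0
  | (_, b) :: t => (if b then 1 else -1) + dyckBal t

theorem dyckBal_append (x y : List (α × Bool)) :
    dyckBal (x ++ y) = dyckBal x + dyckBal y := by
  induction x with
  | nil => simp [dyckBal]
  | cons h t ih =>
    obtain ⟨c, b⟩ := h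
    simp [dyckBal, ih]
    ring

theorem dyckBal_dyck {w : List (α × Bool)} (h : IsDyck w) : dyckBal w = 0 := by
  induction h with
  | nil => rfl
  | cons a hu hv ihu ihv =>
    simp [dyckBal, dyckBal_append, ihu, ihv]

theorem ne_self_append {β : Type} {p w : List β} (hw : w ≠ []) : p ≠ p ++ w := by
  intro he
  have hl := congrArg List.length he
  simp only [List.length_append] at hl
  exact hw (List.length_eq_zero_iff.mp (by omega))

theorem prefix_append_cases {β : Type} {p l₁ l₂ : List β} (h : p <+: l₁ ++ l₂) :
    p <+: l₁ ∨ ∃ q, p = l₁ ++ q ∧ q <+: l₂ := by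
  induction l₁ generalizing p with
  | nil => exact Or.inr ⟨p, by simp, by simpa using h⟩
  | cons x l ih =>
    cases p with
    | nil => exact Or.inl List.nil_prefix
    | cons y p' =>
      rw [List.cons_append, List.cons_prefix_cons] at h
      obtain ⟨rfl, h'⟩ := h
      rcases ih h' with h1 | ⟨q, rfl, hq⟩
      · exact Or.inl (List.cons_prefix_cons.mpr ⟨rfl, h1⟩)
      · exact Or.inr ⟨q, by simp, hq⟩

theorem infix_append_cases {β : Type} {w l₁ l₂ : List β} (h : w <:+: l₁ ++ l₂) :
    w <:+: l₁ ∨ w <:+: l₂ ∨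
      ∃ w₁ w₂, w = w₁ ++ w₂ ∧ w₁ ≠ [] ∧ w₂ ≠ [] ∧ w₁ <:+ l₁ ∧ w₂ <+: l₂ := by
  induction l₁ generalizing w with
  | nil => exact Or.inr (Or.inl (by simpa using h))
  | cons x l ih =>
    obtain ⟨s, t, he⟩ := h
    cases s with
    | nil =>
      have hp : w <+: (x :: l) ++ l₂ := ⟨t, by simpa using he⟩
      rcases prefix_append_cases hp with h1 | ⟨q, hq, hql⟩
      · exact Or.inl h1.isInfix
      · rcases eq_or_ne q [] with rfl | hqne
        · exact Or.inl (by simp [hq])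
        · exact Or.inr (Or.inr ⟨x :: l, q, hq, by simp, hqne, List.suffix_refl _, hql⟩)
    | cons y s' =>
      rw [List.cons_append, List.cons_append, List.cons_append] at he
      injection he with h1 h2
      rcases ih ⟨s', t, h2⟩ with h1 | h1 | ⟨w₁, w₂, rfl, hw₁, hw₂, hsuf, hpre⟩
      · exact Or.inl (List.infix_cons h1)
      · exact Or.inr (Or.inl h1)
      · exact Or.inr (Or.inr ⟨w₁, w₂, rfl, hw₁, hw₂, hsuf.trans (List.suffix_cons x l), hpre⟩)

theorem prime_ne_nil {a : α} {w : List (α × Bool)} (h : IsDyckPrime a w) : w ≠ [] := by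
  obtain ⟨u, _, rfl⟩ := h; simp

theorem dyckBal_prime {a : α} {w : List (α × Bool)} (h : IsDyckPrime a w) : dyckBal w = 0 := by
  obtain ⟨u, hu, rfl⟩ := h
  simp [dyckBal, dyckBal_append, dyckBal_dyck hu]

theorem dyckBal_prefix_dyck {w : List (α × Bool)} (h : IsDyck w) :
    ∀ {p : List (α × Bool)}, p <+: w → 0 ≤ dyckBal p := by
  induction h with
  | nil =>
    intro p hp
    simp [List.prefix_nil.mp hp, dyckBal]
  | cons a hu hv ihu ihv =>
    intro p hp
    cases p with
    | nil => simp [dyckBal]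
    | cons x p' =>
      rw [List.cons_append, List.cons_prefix_cons] at hp
      obtain ⟨rfl, hp'⟩ := hp
      rcases prefix_append_cases hp' with h1 | ⟨q, rfl, hq⟩
      · have := ihu h1
        simp only [dyckBal, reduceIte]
        omega
      · cases q with
        | nil =>
          simp only [dyckBal, dyckBal_append, dyckBal_dyck hu, reduceIte, List.append_nil]
          omega
        | cons y q' =>
          rw [List.cons_prefix_cons] at hq
          obtain ⟨rfl, hq'⟩ := hq
          have := ihv hq'
          simp only [dyckBal, dyckBal_append, dyckBal_dyck hu, reduceIte]
          omega

theorem dyckBal_prefix_prime {a : α} {w p : List (α × Bool)} (h : IsDyckPrime a w)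
    (hp : p <+: w) (hne : p ≠ []) (hnw : p ≠ w) : 1 ≤ dyckBal p := by
  obtain ⟨u, hu, rfl⟩ := h
  cases p with
  | nil => exact absurd rfl hne
  | cons x p' =>
    rw [List.cons_append, List.cons_prefix_cons] at hp
    obtain ⟨rfl, hp'⟩ := hp
    rcases prefix_append_cases hp' with h1 | ⟨q, rfl, hq⟩
    · have := dyckBal_prefix_dyck hu h1
      simp only [dyckBal, reduceIte]
      omega
    · cases q with
      | nil =>
        simp only [dyckBal, dyckBal_append, dyckBal_dyck hu, reduceIte, List.append_nil]
        omega
      | cons y q' =>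
        exfalso
        obtain ⟨t, ht⟩ := hq
        rw [List.cons_append] at ht
        injection ht with ht1 ht2
        subst ht1
        rcases List.append_eq_nil_iff.mp ht2 with ⟨rfl, rfl⟩
        exact hnw rfl

theorem prime_prefix_eq {a b : α} {w v : List (α × Bool)} (hw : IsDyckPrime a w)
    (hv : IsDyckPrime b v) (h : w <+: v) : w = v := by
  by_contra hne
  have h1 := dyckBal_prefix_prime hv h (prime_ne_nil hw) hne
  rw [dyckBal_prime hw] at h1
  omega

theorem prime_suffix_eq {a b : α} {w v : List (α × Bool)} (hw : IsDyckPrime a w)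
    (hv : IsDyckPrime b v) (h : w <:+ v) : w = v := by
  obtain ⟨p, rfl⟩ := h
  rcases eq_or_ne p [] with rfl | hp
  · simp
  · exfalso
    have h1 : 1 ≤ dyckBal p :=
      dyckBal_prefix_prime hv ⟨w, rfl⟩ hp (ne_self_append (prime_ne_nil hw))
    have h2 := dyckBal_prime hv
    rw [dyckBal_append, dyckBal_prime hw] at h2
    omega

theorem prime_head_eq {a b : α} {w : List (α × Bool)} (ha : IsDyckPrime a w)
    (hb : IsDyckPrime b w) : a = b := by
  obtain ⟨u, _, rfl⟩ := ha
  obtain ⟨u', _, he⟩ := hb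
  injection he with h1 _
  exact congrArg Prod.fst h1

theorem prime_infix_flatten {b : α} {w : List (α × Bool)} :
    ∀ {us : List (List (α × Bool))}, (∀ u ∈ us, ∃ c, IsDyckPrime c u) →
      IsDyckPrime b w → w <:+: us.flatten → ∃ u ∈ us, w <:+: u := by
  intro us
  induction us with
  | nil =>
    intro _ hw h
    exact absurd (List.infix_nil.mp h) (prime_ne_nil hw)
  | cons u rest ih =>
    intro hus hw h
    rw [List.flatten_cons] at h
    rcases infix_append_cases h with h1 | h2 | ⟨w₁, w₂, rfl, hw₁, hw₂, hsuf, _⟩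
    · exact ⟨u, by simp, h1⟩
    · obtain ⟨u', hu', hh⟩ := ih (fun x hx => hus x (by simp [hx])) hw h2
      exact ⟨u', by simp [hu'], hh⟩
    · exfalso
      obtain ⟨c, hc⟩ := hus u (by simp)
      have h1 : 1 ≤ dyckBal w₁ :=
        dyckBal_prefix_prime hw ⟨w₂, rfl⟩ hw₁ (ne_self_append hw₂)
      obtain ⟨p, rfl⟩ := hsuf
      have h0 := dyckBal_prime hc
      rw [dyckBal_append] at h0
      rcases eq_or_ne p [] with rfl | hp
      · simp only [dyckBal] at h0
        omega
      · have h2 : 1 ≤ dyckBal p :=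
          dyckBal_prefix_prime hc ⟨w₁, rfl⟩ hp (ne_self_append hw₁)
        omega

theorem dyck_flatten : ∀ {m : List α} {us : List (List (α × Bool))},
    List.Forall₂ IsDyckPrime m us → IsDyck us.flatten := by
  intro m us h
  induction h with
  | nil => exact IsDyck.nil
  | @cons c u' m1 us1 ha _ ih =>
    obtain ⟨u, hu, rfl⟩ := ha
    rw [List.flatten_cons]
    have h2 := IsDyck.cons c hu ih
    simpa using h2

theorem forall₂_mem_right {β γ : Type} {r : β → γ → Prop} :
    ∀ {m : List β} {us : List γ}, List.Forall₂ r m us → ∀ u ∈ us, ∃ c ∈ m, r c u := by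
  intro m us h
  induction h with
  | nil => intro u hu; simp at hu
  | cons hr _ ih =>
    intro u hu
    rcases List.mem_cons.mp hu with rfl | hu'
    · exact ⟨_, by simp, hr⟩
    · obtain ⟨c, hc, hrc⟩ := ih u hu'
      exact ⟨c, by simp [hc], hrc⟩

theorem forall₂_imp_mem {β γ : Type} {r s : β → γ → Prop} :
    ∀ {m : List β} {us : List γ}, List.Forall₂ r m us →
      (∀ c u, u ∈ us → r c u → s c u) → List.Forall₂ s m us := by
  intro m us h
  induction h with
  | nil => intro _; exact List.Forall₂.nil
  | cons hr _ ih =>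
    intro H
    exact List.Forall₂.cons (H _ _ (by simp) hr)
      (ih fun c u hu hr' => H c u (by simp [hu]) hr')

theorem gen_inv {R : α → Set (List α)} {a : α} {w : List (α × Bool)} (h : Gen R a w) :
    ∃ m us, m ∈ R a ∧ List.Forall₂ (Gen R) m us ∧
      w = (a, true) :: us.flatten ++ [(a, false)] := by
  cases h with
  | mk _ m us hm hf => exact ⟨m, us, hm, hf, rfl⟩

theorem gen_prime_aux (R : α → Set (List α)) :
    ∀ n (w : List (α × Bool)), w.length ≤ n → ∀ a, Gen R a w → IsDyckPrime a w := by
  intro n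
  induction n with
  | zero =>
    intro w hw a h
    obtain ⟨m, us, _, _, rfl⟩ := gen_inv h
    simp at hw
  | succ n ih =>
    intro w hw a h
    obtain ⟨m, us, hm, hf, rfl⟩ := gen_inv h
    have hflatlen : us.flatten.length ≤ n := by
      simp only [List.length_cons, List.length_append, List.length_singleton] at hw
      omega
    have hprime : List.Forall₂ IsDyckPrime m us :=
      forall₂_imp_mem hf (fun c u hu hg =>
        ih u (le_trans (List.IsInfix.length_le (List.infix_of_mem_flatten hu)) hflatlen) c hg)
    exact ⟨us.flatten, dyck_flatten hprime, rfl⟩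

theorem gen_prime {R : α → Set (List α)} {a : α} {w : List (α × Bool)}
    (h : Gen R a w) : IsDyckPrime a w :=
  gen_prime_aux R w.length w le_rfl a h

theorem gen_of_infix_aux (R : α → Set (List α)) :
    ∀ n (v : List (α × Bool)), v.length ≤ n → ∀ a, Gen R a v →
      ∀ b (w : List (α × Bool)), IsDyckPrime b w → w <:+: v → Gen R b w := by
  intro n
  induction n with
  | zero =>
    intro v hv a h
    obtain ⟨m, us, _, _, rfl⟩ := gen_inv h
    simp at hv
  | succ n ih =>
    intro v hv a h b w hw hinf
    have hvp : IsDyckPrime a v := gen_prime h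
    obtain ⟨s, t, he⟩ := hinf
    rcases eq_or_ne s [] with rfl | hs
    · have hwv : w = v := prime_prefix_eq hw hvp ⟨t, by simpa using he⟩
      subst hwv
      have hba : b = a := prime_head_eq hw hvp
      subst hba
      exact h
    rcases eq_or_ne t [] with rfl | ht
    · have hwv : w = v := prime_suffix_eq hw hvp ⟨s, by simpa using he⟩
      subst hwv
      have hba : b = a := prime_head_eq hw hvp
      subst hba
      exact h
    obtain ⟨m, us, hm, hf, rfl⟩ := gen_inv h
    obtain ⟨x, s', rfl⟩ : ∃ x s', s = x :: s' := by
      cases s with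
      | nil => exact absurd rfl hs
      | cons x s' => exact ⟨x, s', rfl⟩
    rw [List.cons_append, List.cons_append] at he
    injection he with he1 he2
    obtain ⟨t'', z, rfl⟩ : ∃ t'' z, t = t'' ++ [z] :=
      ⟨t.dropLast, t.getLast ht, (List.dropLast_append_getLast ht).symm⟩
    rw [← List.append_assoc] at he2
    have hflat : (s' ++ w) ++ t'' = us.flatten := (List.append_inj' he2 rfl).1
    have hwin : w <:+: us.flatten := ⟨s', t'', by rw [← hflat, List.append_assoc]⟩
    have hus : ∀ u ∈ us, ∃ c, IsDyckPrime c u := fun u hu => by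
      obtain ⟨c, _, hc⟩ := forall₂_mem_right hf u hu
      exact ⟨c, gen_prime hc⟩
    obtain ⟨u, hu, hwu⟩ := prime_infix_flatten hus hw hwin
    obtain ⟨c, _, hgc⟩ := forall₂_mem_right hf u hu
    have hflatlen : us.flatten.length ≤ n := by
      simp only [List.length_cons, List.length_append, List.length_singleton] at hv
      omega
    exact ih u (le_trans (List.IsInfix.length_le (List.infix_of_mem_flatten hu)) hflatlen)
      c hgc b w hw hwu

theorem gen_of_infix {R : α → Set (List α)} {a b : α} {v w : List (α × Bool)}
    (h : Gen R a v) (hw : IsDyckPrime b w) (hinf : w <:+: v) : Gen R b w :=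
  gen_of_infix_aux R v.length v le_rfl a h b w hw hinf

theorem flatten_prime_unique :
    ∀ {m : List α} {us : List (List (α × Bool))} {m' : List α} {us' : List (List (α × Bool))},
      List.Forall₂ IsDyckPrime m us → List.Forall₂ IsDyckPrime m' us' →
      us.flatten = us'.flatten → m = m' := by
  intro m us m' us' h
  induction h generalizing m' us' with
  | nil =>
    intro h' he
    cases h' with
    | nil => rfl
    | cons hc _ =>
      exfalso
      rw [List.flatten_nil, List.flatten_cons] at he
      rcases List.append_eq_nil_iff.mp he.symm with ⟨h1, _⟩
      exact prime_ne_nil hc h1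
  | @cons a u m1 us1 hau htail ih =>
    intro h' he
    cases h' with
    | nil =>
      exfalso
      rw [List.flatten_nil, List.flatten_cons] at he
      rcases List.append_eq_nil_iff.mp he with ⟨h1, _⟩
      exact prime_ne_nil hau h1
    | @cons a' u' m2 us2 hau' htail' =>
      rw [List.flatten_cons, List.flatten_cons] at he
      have huu : u = u' := by
        have hp1 : u <+: u ++ us1.flatten := ⟨us1.flatten, rfl⟩
        have hp2 : u' <+: u ++ us1.flatten := ⟨us2.flatten, he.symm⟩
        rcases List.prefix_or_prefix_of_prefix hp1 hp2 with hh | hh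
        · exact prime_prefix_eq hau hau' hh
        · exact (prime_prefix_eq hau' hau hh).symm
      subst huu
      have haa : a = a' := prime_head_eq hau hau'
      subst haa
      have hrest : us1.flatten = us2.flatten := List.append_cancel_left he
      rw [ih htail' hrest]

theorem gen_transfer (R₁ R₂ : α → Set (List α)) (L₁ L₂ : Set (List (α × Bool))) (a₀ : α)
    (hL₂ : ∀ v ∈ L₂, Gen R₂ a₀ v)
    (hS : ∀ a, Surface L₁ a ⊆ Surface L₂ a) :
    ∀ n (w : List (α × Bool)), w.length ≤ n → ∀ a, Gen R₁ a w →
      (∃ v ∈ L₁, w <:+: v) → Gen R₂ a w := by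
  intro n
  induction n with
  | zero =>
    intro w hw a h _
    obtain ⟨m, us, _, _, rfl⟩ := gen_inv h
    simp at hw
  | succ n ih =>
    intro w hw a h hmem
    obtain ⟨m, us, hm, hf, rfl⟩ := gen_inv h
    have hflatlen : us.flatten.length ≤ n := by
      simp only [List.length_cons, List.length_append, List.length_singleton] at hw
      omega
    have hprime : List.Forall₂ IsDyckPrime m us :=
      forall₂_imp_mem hf (fun c u _ hg => gen_prime hg)
    have hSurf1 : m ∈ Surface L₁ a :=
      ⟨us, hprime, ⟨⟨us.flatten, dyck_flatten hprime, rfl⟩, hmem⟩⟩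
    obtain ⟨us', hprime', hw', v', hv', hinf'⟩ := hS a hSurf1
    have hg' : Gen R₂ a ((a, true) :: us'.flatten ++ [(a, false)]) :=
      gen_of_infix (hL₂ v' hv') hw' hinf'
    have hm₂ : m ∈ R₂ a := by
      obtain ⟨m'', us'', hm'', hf'', heq⟩ := gen_inv hg'
      injection heq with _ heq2
      have h2 : us'.flatten = us''.flatten := (List.append_inj' heq2 rfl).1
      have hmm : m = m'' :=
        flatten_prime_unique hprime'
          (forall₂_imp_mem hf'' fun c u _ hg => gen_prime hg) h2
      rw [hmm]; exact hm''
    have hchild : List.Forall₂ (Gen R₂) m us :=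
      forall₂_imp_mem hf (fun c u hu hg => by
        obtain ⟨v, hvL, hvinf⟩ := hmem
        refine ih u (le_trans (List.IsInfix.length_le (List.infix_of_mem_flatten hu))
          hflatlen) c hg ⟨v, hvL, ?_⟩
        refine ((List.infix_of_mem_flatten hu).trans ?_).trans hvinf
        exact ⟨[(a, true)], [(a, false)], rfl⟩)
    exact Gen.mk a m us hm₂ hchild

end Aux

/-- Corollary 3.10: for XML-languages `L₁, L₂ ⊆ D_{a₀}`, one has `L₁ ⊆ L₂` iff
`S_a(L₁) ⊆ S_a(L₂)` for every letter `a`. -/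
theorem xml_inclusion_iff_surfaces [Fintype α]
    (R₁ R₂ : α → Set (List α)) (a₀ : α)
    (hG₁ : IsXMLGrammar R₁) (hG₂ : IsXMLGrammar R₂)
    (hred₁ : Reduced R₁ a₀) (hred₂ : Reduced R₂ a₀)
    (L₁ L₂ : Set (List (α × Bool)))
    (hL₁ : L₁ = {w | Gen R₁ a₀ w}) (hL₂ : L₂ = {w | Gen R₂ a₀ w})
    (hD₁ : L₁ ⊆ {w | IsDyckPrime a₀ w}) (hD₂ : L₂ ⊆ {w | IsDyckPrime a₀ w}) :
    L₁ ⊆ L₂ ↔ ∀ a : α, Surface L₁ a ⊆ Surface L₂ a := by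
  constructor
  · intro hsub a m hm
    obtain ⟨us, hus, hprime, v, hv, hinf⟩ := hm
    exact ⟨us, hus, hprime, v, hsub hv, hinf⟩
  · intro hS w hw
    have hg : Gen R₁ a₀ w := by rw [hL₁] at hw; exact hw
    rw [hL₂]
    exact gen_transfer R₁ R₂ L₁ L₂ a₀ (fun v hv => by rw [hL₂] at hv; exact hv) hS
      w.length w le_rfl a₀ hg ⟨w, hw, List.infix_refl w⟩
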